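/- The formal power series Z(q) = (∏_{m=1}^∞ (1-q^m)^{-1})² · ∏_{m=1}^∞ (1 - q^{2m})(1 - q^{2m-1} + q^{4m-2}) has integer coefficients; in fact all its coefficients are nonnegative integers. -/

import Mathlib

open PowerSeries Finset

noncomputable def S (k : ℕ) : PowerSeries ℚ :=
  PowerSeries.mk fun n => if k ∣ n then 1 else 0

lemma one_sub_mul_S (k : ℕ) (hk : k ≠ 0) : (1 - (X : PowerSeries ℚ) ^ k) * S k = 1 := by
  ext n
  rw [sub_mul, one_mul, map_sub]
  rw [show (X : PowerSeries ℚ)^k * S k = S k * X^k by ring, coeff_mul_X_pow']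
  rcases eq_or_ne n 0 with rfl | hn
  · rw [if_neg (by omega : ¬ k ≤ 0)]
    simp [S]
  · rw [coeff_one, if_neg hn]
    by_cases hkn : k ≤ n
    · rw [if_pos hkn]
      simp only [S, coeff_mk]
      have : k ∣ n ↔ k ∣ n - k := by
        constructor
        · intro h; exact (Nat.dvd_sub h dvd_rfl)
        · intro h; have := Nat.dvd_add h (dvd_refl k); rwa [Nat.sub_add_cancel hkn] at this
      rcases em (k ∣ n) with h | h
      · rw [if_pos h, if_pos (this.mp h), sub_self]
      · rw [if_neg h, if_neg (fun hh => h (this.mpr hh)), sub_self]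
    · rw [if_neg hkn]
      simp only [S, coeff_mk, sub_zero]
      rw [if_neg]
      intro hd
      exact hkn (Nat.le_of_dvd (Nat.pos_of_ne_zero hn) hd)

lemma constCoeff_one_sub (k : ℕ) (hk : k ≠ 0) :
    constantCoeff (1 - (X : PowerSeries ℚ) ^ k) ≠ 0 := by
  rw [map_sub, map_one, map_pow, constantCoeff_X, zero_pow hk, sub_zero]
  exact one_ne_zero

lemma inv_one_sub (k : ℕ) (hk : k ≠ 0) : (1 - (X : PowerSeries ℚ) ^ k)⁻¹ = S k := by
  rw [PowerSeries.inv_eq_iff_mul_eq_one (constCoeff_one_sub k hk)]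
  rw [mul_comm]; exact one_sub_mul_S k hk

/-- Subsemiring of power series with natural-number coefficients. -/
noncomputable def NNsr : Subsemiring (PowerSeries ℚ) :=
  (PowerSeries.map (Nat.castRingHom ℚ)).rangeS

lemma coeff_of_mem_NNsr {f : PowerSeries ℚ} (hf : f ∈ NNsr) (n : ℕ) :
    ∃ a : ℕ, PowerSeries.coeff (R := ℚ) n f = (a : ℚ) := by
  obtain ⟨g, rfl⟩ := hf
  exact ⟨PowerSeries.coeff n g, by rw [PowerSeries.coeff_map]; rfl⟩

lemma S_mem (k : ℕ) : S k ∈ NNsr := by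
  refine ⟨PowerSeries.mk fun n => if k ∣ n then 1 else 0, ?_⟩
  ext n
  simp [S, PowerSeries.coeff_map, apply_ite]

lemma X_mem : (X : PowerSeries ℚ) ∈ NNsr := ⟨X, by simp⟩

/-- The factor for an index `k`. -/
noncomputable def c (k : ℕ) : PowerSeries ℚ :=
  if Even k then 1 - X ^ k else 1 - X ^ k + X ^ (2 * k)

lemma e_mem (k : ℕ) (hk : k ≠ 0) :
    (1 - (X : PowerSeries ℚ) ^ k)⁻¹ * (1 - X ^ k)⁻¹ * c k ∈ NNsr := by
  have hu : (1 - (X : PowerSeries ℚ) ^ k) * S k = 1 := one_sub_mul_S k hk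
  rw [inv_one_sub k hk]
  unfold c
  by_cases h : Even k
  · rw [if_pos h]
    have : S k * S k * (1 - X ^ k) = S k := by
      calc S k * S k * (1 - X ^ k) = ((1 - X^k) * S k) * S k := by ring
      _ = S k := by rw [hu, one_mul]
    rw [this]; exact S_mem k
  · rw [if_neg h]
    have key : (1 - (X : PowerSeries ℚ) ^ k + X ^ (2*k)) = (1 - X^k)^2 + X^k := by
      rw [pow_mul']
      ring
    rw [key]
    have : S k * S k * ((1 - (X : PowerSeries ℚ)^k)^2 + X^k)
        = 1 + X^k * (S k * S k) := by
      have h2 : S k * S k * (1 - (X : PowerSeries ℚ)^k)^2 = 1 := by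
        calc S k * S k * (1 - (X : PowerSeries ℚ)^k)^2
            = ((1 - X^k) * S k) * ((1 - X^k) * S k) := by ring
          _ = 1 := by rw [hu, one_mul]
      calc S k * S k * ((1 - (X : PowerSeries ℚ)^k)^2 + X^k)
          = S k * S k * (1 - X^k)^2 + X^k * (S k * S k) := by ring
        _ = 1 + X^k * (S k * S k) := by rw [h2]
    rw [this]
    exact add_mem (one_mem _) (mul_mem (pow_mem X_mem k) (mul_mem (S_mem k) (S_mem k)))

/-- Factors beyond N are 1 mod X^(N+1). -/
def T (N : ℕ) (g : PowerSeries ℚ) : Prop := ∃ h, g = 1 + X ^ (N+1) * h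

lemma T_mul {N : ℕ} {g₁ g₂ : PowerSeries ℚ} (h₁ : T N g₁) (h₂ : T N g₂) : T N (g₁ * g₂) := by
  obtain ⟨a, rfl⟩ := h₁; obtain ⟨b, rfl⟩ := h₂
  exact ⟨a + b + X^(N+1) * a * b, by ring⟩

lemma T_one {N : ℕ} : T N (1 : PowerSeries ℚ) := ⟨0, by ring⟩

lemma c_T {N k : ℕ} (hk : N < k) : T N (c k) := by
  have h1 : (X : PowerSeries ℚ)^k = X^(N+1) * X^(k - (N+1)) := by
    rw [← pow_add]; congr 1; omega
  have h2 : (X : PowerSeries ℚ)^(2*k) = X^(N+1) * X^(2*k - (N+1)) := by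
    rw [← pow_add]; congr 1; omega
  unfold c
  by_cases h : Even k
  · rw [if_pos h]; exact ⟨-(X^(k - (N+1))), by rw [h1]; ring⟩
  · rw [if_neg h]; exact ⟨X^(2*k-(N+1)) - X^(k-(N+1)), by rw [h1, h2]; ring⟩

lemma coeff_mul_T {N : ℕ} {f g : PowerSeries ℚ} (hg : T N g) :
    PowerSeries.coeff (R := ℚ) N (f * g) = PowerSeries.coeff (R := ℚ) N f := by
  obtain ⟨h, rfl⟩ := hg
  have : f * (1 + X^(N+1) * h) = f + (f * h) * X^(N+1) := by ring
  rw [this, map_add, coeff_mul_X_pow', if_neg (by omega)]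
  ring

lemma reindex (N : ℕ) :
    (∏ m ∈ Finset.Icc 1 N,
        (1 - (X : PowerSeries ℚ) ^ (2 * m)) * (1 - X ^ (2 * m - 1) + X ^ (4 * m - 2)))
      = ∏ k ∈ Finset.Icc 1 (2 * N), c k := by
  induction N with
  | zero => simp
  | succ n ih =>
    rw [Finset.prod_Icc_succ_top (by omega), ih,
      show 2 * (n+1) = (2*n+1) + 1 by ring,
      Finset.prod_Icc_succ_top (by omega), Finset.prod_Icc_succ_top (by omega)]
    have hodd : c (2*n+1) = 1 - X^(2*n+1) + X^(2*(2*n+1)) := by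
      unfold c; rw [if_neg (by simp [Nat.even_add_one, parity_simps])]
    have heven : c (2*n+1+1) = 1 - X^(2*n+1+1) := by
      unfold c; rw [if_pos ⟨n+1, by omega⟩]
    rw [hodd, heven, show 2*n+1+1-1 = 2*n+1 by omega,
      show 4*(n+1)-2 = 2*(2*n+1) by omega]
    ring

/-- The series `Z(q) = (∏_{m≥1}(1-qᵐ)⁻¹)² · ∏_{m≥1}(1-q^{2m})(1-q^{2m-1}+q^{4m-2})`
has nonnegative integer coefficients.  (The products are truncated at `m = N`, beyond
which the factors do not affect the coefficient of `q^N`.) -/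
theorem Z_A1_coefficients_nonneg_integers (N : ℕ) :
    ∃ a : ℕ,
      PowerSeries.coeff (R := ℚ) N
          ((∏ m ∈ Finset.Icc 1 N, (1 - (X : PowerSeries ℚ) ^ m)⁻¹) ^ 2 *
            ∏ m ∈ Finset.Icc 1 N,
              (1 - (X : PowerSeries ℚ) ^ (2 * m)) *
                (1 - X ^ (2 * m - 1) + X ^ (4 * m - 2))) = (a : ℚ) := by
  rw [reindex]
  have hsplit : (∏ k ∈ Finset.Icc 1 (2 * N), c k)
      = (∏ k ∈ Finset.Icc 1 N, c k) * ∏ k ∈ Finset.Ioc N (2*N), c k := by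
    rw [show Finset.Icc 1 (2*N) = Finset.Ioc 0 (2*N) from (Finset.Icc_add_one_left_eq_Ioc 0 (2*N)),
      show Finset.Icc 1 N = Finset.Ioc 0 N from (Finset.Icc_add_one_left_eq_Ioc 0 N)]
    exact (Finset.prod_Ioc_consecutive c (Nat.zero_le N) (by omega)).symm
  rw [hsplit, ← mul_assoc]
  have hmain : (∏ m ∈ Finset.Icc 1 N, (1 - (X : PowerSeries ℚ) ^ m)⁻¹) ^ 2 *
      (∏ k ∈ Finset.Icc 1 N, c k)
      = ∏ k ∈ Finset.Icc 1 N, ((1 - (X : PowerSeries ℚ)^k)⁻¹ * (1 - X^k)⁻¹ * c k) := by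
    rw [sq, ← Finset.prod_mul_distrib, ← Finset.prod_mul_distrib]
  rw [hmain]
  have hT : T N (∏ k ∈ Finset.Ioc N (2*N), c k) :=
    Finset.prod_induction c (T N) (fun _ _ => T_mul) T_one
      (fun k hk => c_T (Finset.mem_Ioc.mp hk).1)
  rw [coeff_mul_T hT]
  refine coeff_of_mem_NNsr ?_ N
  exact prod_mem fun k hk => e_mem k (by have := (Finset.mem_Icc.mp hk).1; omega)
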